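/- Let (V,X,d) be a continuity space. The topology generated by (V,X,d) is Kolmogorov (T0) if and only if for all x, y ∈ X, d(x,y) = ⊥ and d(y,x) = ⊥ imply x = y. -/

import Mathlib

/-- `y` is well above `x` (written `y ≻ x`): for every `S` with `⨅ S ≤ x`
there is `s ∈ S` with `s ≤ y`. -/
def WellAbove {V : Type*} [CompleteLattice V] (y x : V) : Prop :=
  ∀ S : Set V, sInf S ≤ x → ∃ s ∈ S, s ≤ y

theorem WellAbove.mono {V : Type*} [CompleteLattice V] {a b x : V}
    (h : WellAbove a x) (hab : a ≤ b) : WellAbove b x := by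
  intro S hS
  obtain ⟨s, hs, hsa⟩ := h S hS
  exact ⟨s, hs, hsa.trans hab⟩

/-- A complete lattice `V` together with an addition `add` is a value quantale if it is
completely distributive (expressed via Raney's characterization `y = ⨅ {a | a ≻ y}`),
the set `{a | a ≻ ⊥}` is a filter (nonempty, upward closed, closed under binary meets),
and `add` is associative, commutative, has `⊥` as neutral element and distributes over
arbitrary infima. -/
structure IsValueQuantale (V : Type*) [CompleteLattice V] (add : V → V → V) : Prop where
  raney : ∀ y : V, y = sInf {a | WellAbove a y}
  wellAbove_bot_nonempty : ∃ a : V, WellAbove a ⊥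
  wellAbove_bot_upward : ∀ a b : V, WellAbove a ⊥ → a ≤ b → WellAbove b ⊥
  wellAbove_bot_inf : ∀ a b : V, WellAbove a ⊥ → WellAbove b ⊥ → WellAbove (a ⊓ b) ⊥
  add_assoc : ∀ a b c : V, add (add a b) c = add a (add b c)
  add_comm : ∀ a b : V, add a b = add b a
  add_bot : ∀ a : V, add a ⊥ = a
  add_sInf : ∀ (a : V) (S : Set V), add a (sInf S) = ⨅ s ∈ S, add a s

/-- A value quantale, bundled as a class. -/
class ValueQuantale (V : Type*) extends CompleteLattice V, Add V where
  isVQ : IsValueQuantale V (· + ·)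

/-- `d : X → X → V` is a `V`-space distance (w.r.t. the addition `add`). -/
structure IsVSpaceOn {V : Type*} [CompleteLattice V] (add : V → V → V)
    {X : Type*} (d : X → X → V) : Prop where
  refl : ∀ x, d x x = ⊥
  triangle : ∀ x y z, d x z ≤ add (d x y) (d y z)

/-- The open ball of radius `ε` about `x`: all `y` with `d x y ≺ ε`. -/
def ball {V X : Type*} [CompleteLattice V] (d : X → X → V) (ε : V) (x : X) : Set X :=
  {y | WellAbove ε (d x y)}

/-- `U` is open for the topology generated by a continuity space. -/
def GenOpen {V X : Type*} [CompleteLattice V] (d : X → X → V) (U : Set X) : Prop :=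
  ∀ x ∈ U, ∃ ε : V, WellAbove ε ⊥ ∧ ball d ε x ⊆ U

/-- The topology generated by a continuity space `(V, X, d)`. -/
def genTop {V X : Type*} [ValueQuantale V] (d : X → X → V) : TopologicalSpace X where
  IsOpen := GenOpen d
  isOpen_univ := fun _x _ => by
    obtain ⟨ε, hε⟩ := (ValueQuantale.isVQ (V := V)).wellAbove_bot_nonempty
    exact ⟨ε, hε, Set.subset_univ _⟩
  isOpen_inter := fun U₁ U₂ h₁ h₂ x hx => by
    obtain ⟨ε₁, hε₁, hb₁⟩ := h₁ x hx.1
    obtain ⟨ε₂, hε₂, hb₂⟩ := h₂ x hx.2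
    exact ⟨ε₁ ⊓ ε₂, (ValueQuantale.isVQ (V := V)).wellAbove_bot_inf _ _ hε₁ hε₂,
      fun y hy => ⟨hb₁ (WellAbove.mono hy inf_le_left), hb₂ (WellAbove.mono hy inf_le_right)⟩⟩
  isOpen_sUnion := fun S hS x hx => by
    obtain ⟨U, hU, hxU⟩ := hx
    obtain ⟨ε, hε, hb⟩ := hS U hU x hxU
    exact ⟨ε, hε, hb.trans (Set.subset_sUnion_of_mem hU)⟩

/-- `Ω S`: the downward-closed families of finite subsets of `S`,
ordered by reverse inclusion. -/
abbrev Omega (S : Type*) := (LowerSet (Finset S))ᵒᵈ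

/-- The underlying family of finite subsets of an element of `Ω S`. -/
def Omega.carrier {S : Type*} (A : Omega S) : Set (Finset S) :=
  ((OrderDual.ofDual A : LowerSet (Finset S)) : Set (Finset S))

/-- Construct an element of `Ω S` from a downward-closed family of finite subsets. -/
def Omega.mk {S : Type*} (A : Set (Finset S)) (h : IsLowerSet A) : Omega S :=
  OrderDual.toDual ⟨A, h⟩

/-- Addition on `Ω S`: intersection of the families. -/
def omegaAdd {S : Type*} (A B : Omega S) : Omega S :=
  Omega.mk (Omega.carrier A ∩ Omega.carrier B)
    ((OrderDual.ofDual A : LowerSet (Finset S)).lower.inter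
      (OrderDual.ofDual B : LowerSet (Finset S)).lower)

/-! Every ball is open: by interpolation (complete distributivity) and `⨅ V_≺ = ⊥`, a point `z`
with `d x z ≺ ε` admits some `δ ≻ ⊥` with `d x z + δ ≺ ε`, and then the triangle inequality puts
the `δ`-ball about `z` inside the `ε`-ball about `x`. Since `V_≺` has infimum `⊥`, the point `y`
specializes to `x` exactly when `d x y = ⊥`, and T0 means that mutual specialization forces
equality. -/

namespace WellAbove

variable {V : Type*} [CompleteLattice V] {a p q : V}

theorem anti (h : WellAbove a p) (hqp : q ≤ p) : WellAbove a q :=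
  fun S hS => h S (hS.trans hqp)

theorem le (h : WellAbove a p) : p ≤ a := by
  obtain ⟨s, rfl, hs⟩ := h {p} (by simp)
  exact hs

theorem exists_between (raney : ∀ y : V, y = sInf {a | WellAbove a y}) (h : WellAbove a p) :
    ∃ q, WellAbove a q ∧ WellAbove q p := by
  set S : Set V := {b | ∃ q, WellAbove q p ∧ WellAbove b q}
  have hS : sInf S ≤ p := calc
    sInf S ≤ sInf {q | WellAbove q p} := le_sInf fun q hq => calc
      sInf S ≤ sInf {b | WellAbove b q} := sInf_le_sInf fun b hb => ⟨q, hq, hb⟩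
      _ = q := (raney q).symm
    _ = p := (raney p).symm
  obtain ⟨b, ⟨q, hqp, hbq⟩, hba⟩ := h S hS
  exact ⟨q, hbq.mono hba, hqp⟩

end WellAbove

section ValueQuantale

variable {V : Type*} [ValueQuantale V]

theorem sInf_wellAbove_bot : sInf {a : V | WellAbove a ⊥} = ⊥ :=
  (ValueQuantale.isVQ.raney ⊥).symm

theorem add_le_add_left_of_le {a b : V} (h : a ≤ b) (p : V) : p + a ≤ p + b := by
  have h_pair := (ValueQuantale.isVQ (V := V)).add_sInf p {a, b}
  rw [sInf_pair, inf_eq_left.mpr h, iInf_pair] at h_pair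
  exact h_pair ▸ inf_le_right

theorem WellAbove.exists_wellAbove_add {ε p : V} (h : WellAbove ε p) :
    ∃ δ, WellAbove δ ⊥ ∧ WellAbove ε (p + δ) := by
  have vq := ValueQuantale.isVQ (V := V)
  obtain ⟨q, hεq, hqp⟩ := h.exists_between vq.raney
  have hp : sInf ((p + ·) '' {δ : V | WellAbove δ ⊥}) = p := by
    rw [sInf_image, ← vq.add_sInf, sInf_wellAbove_bot, vq.add_bot]
  obtain ⟨_, ⟨δ, hδ, rfl⟩, hδq⟩ := hqp _ hp.le
  exact ⟨δ, hδ, hεq.anti hδq⟩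

variable {X : Type*} {d : X → X → V}

theorem isOpen_ball (hd : IsVSpaceOn (· + · : V → V → V) d) (ε : V) (x : X) :
    @IsOpen X (genTop d) (ball d ε x) := by
  intro z hz
  obtain ⟨δ, hδ, hεδ⟩ := WellAbove.exists_wellAbove_add hz
  exact ⟨δ, hδ, fun w hw =>
    hεδ.anti ((hd.triangle x z w).trans (add_le_add_left_of_le hw.le _))⟩

theorem specializes_genTop_iff (hd : IsVSpaceOn (· + · : V → V → V) d) {x y : X} :
    @Specializes X (genTop d) y x ↔ d x y = ⊥ := by
  let _ : TopologicalSpace X := genTop d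
  have hx : ∀ ε, WellAbove ε ⊥ → x ∈ ball d ε x := fun ε hε =>
    show WellAbove ε (d x x) from (hd.refl x).symm ▸ hε
  rw [specializes_iff_forall_open]
  constructor
  · intro hyx
    rw [← le_bot_iff, ← sInf_wellAbove_bot]
    exact le_sInf fun ε hε => (hyx _ (isOpen_ball hd ε x) (hx ε hε)).le
  · intro hxy U hU hxU
    obtain ⟨ε, hε, hball⟩ := hU x hxU
    exact hball (show WellAbove ε (d x y) from hxy ▸ hε)

end ValueQuantale

/-- the topology generated by a continuity space `(V,X,d)` is T0 iff
`d(x,y) = ⊥` and `d(y,x) = ⊥` imply `x = y`. -/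
theorem t0_iff {V X : Type*} [ValueQuantale V] (d : X → X → V)
    (hd : IsVSpaceOn (· + · : V → V → V) d) :
    @T0Space X (genTop d) ↔ ∀ x y : X, d x y = ⊥ → d y x = ⊥ → x = y := by
  let _ : TopologicalSpace X := genTop d
  simp only [t0Space_iff_inseparable, inseparable_iff_specializes_and,
    specializes_genTop_iff hd]
  exact ⟨fun h x y hxy hyx => h x y ⟨hyx, hxy⟩, fun h x y ⟨hyx, hxy⟩ => h x y hxy hyx⟩
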